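/- Let (b₀,b₁,…) be a sequence of integers with |b_i| ≥ 2 for i = 1, …, n−1 and b_n = 0, and let 1 ≤ k < n. Then the convergents v_{k−1} and v_n of [b₀,b₁,…] are real numbers (not ∞) and satisfy |v_n − v_{k−1}| ≤ 1/(|b_k| − 1). -/

import Mathlib

open Filter Topology OnePoint

/-- The Möbius map `z ↦ b - 1/z` on the one-point compactification `ℝ∞` of `ℝ`. -/
noncomputable def mob (b : ℤ) (z : OnePoint ℝ) : OnePoint ℝ :=
  Option.elim z ((b : ℝ) : OnePoint ℝ)
    (fun x => if x = 0 then (∞ : OnePoint ℝ) else (((b : ℝ) - 1 / x : ℝ) : OnePoint ℝ))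

/-- Value of a finite continued fraction `[b₀, …, b_m]`, i.e. `s₀(s₁(⋯ s_m(∞)))`. -/
noncomputable def cfVal : List ℤ → OnePoint ℝ
  | [] => ∞
  | b :: t => mob b (cfVal t)

/-- The `n`th convergent `v_n = S_n(∞)` of the continued fraction `[b₀, b₁, …]`. -/
noncomputable def cfConv (b : ℕ → ℤ) (n : ℕ) : OnePoint ℝ :=
  cfVal ((List.range (n + 1)).map b)

/-- `m` is a positive index at which the coefficient is `0`, `1` or `-1`. -/
def badIdx (b : ℕ → ℤ) (m : ℕ) : Prop :=
  1 ≤ m ∧ (b m = 0 ∨ b m = 1 ∨ b m = -1)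

instance (b : ℕ → ℤ) : DecidablePred (badIdx b) := fun m => by
  unfold badIdx; infer_instance

-- The singularization map `Φ` on integer sequences.
open Classical in
noncomputable def Phi (b : ℕ → ℤ) : ℕ → ℤ :=
  if h : ∃ m, badIdx b m then
    let m := Nat.find h
    if b m = 0 then
      fun k => if k + 1 < m then b k
        else if k = m - 1 then b (m - 1) + b (m + 1)
        else b (k + 2)
    else if b m = 1 then
      fun k => if k + 1 < m then b k
        else if k = m - 1 then b (m - 1) - 1
        else if k = m then b (m + 1) - 1
        else b (k + 1)
    else
      fun k => if k + 1 < m then b k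
        else if k = m - 1 then b (m - 1) + 1
        else if k = m then b (m + 1) + 1
        else b (k + 1)
  else b

-- `p(b) ∈ ℕ ∪ {∞}`: the least positive index at which `0`, `1` or `-1` occurs.
open Classical in
noncomputable def pIdx (b : ℕ → ℤ) : ℕ∞ :=
  if h : ∃ m, badIdx b m then (Nat.find h : ℕ∞) else ⊤

/-- `p⁽ⁿ⁾ → ∞` as `n → ∞`. -/
def PTendsToTop (b : ℕ → ℤ) : Prop :=
  ∀ N : ℕ, ∃ M : ℕ, ∀ n ≥ M, (N : ℕ∞) < pIdx (Phi^[n] b)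

/-- `p = liminf pⁿ`, as a natural number (junk value if the liminf is `∞`). -/
noncomputable def pLim (b : ℕ → ℤ) : ℕ :=
  (Filter.liminf (fun n => pIdx (Phi^[n] b)) Filter.atTop).toNat

/-- `q⁽ⁿ⁾ = |b⁽ⁿ⁾_{p-1}|`. -/
noncomputable def qSeq (b : ℕ → ℤ) (n : ℕ) : ℕ :=
  ((Phi^[n] b) (pLim b - 1)).natAbs

/-- Two continued fractions have the same tail. -/
def SameTail (b c : ℕ → ℤ) : Prop := ∃ r s : ℕ, ∀ k : ℕ, b (r + k) = c (s + k)

/-- `bstar` is the limit continued fraction: each coefficient of `Φⁿ(b)` stabilises on it. -/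
def EventuallyCoeff (b bstar : ℕ → ℤ) : Prop :=
  ∀ k : ℕ, ∃ N : ℕ, ∀ n ≥ N, Phi^[n] b k = bstar k

/-- The point of `ℝ∞` represented by the integer fraction `a/b` (`∞` when `b = 0`). -/
noncomputable def intPt (a b : ℤ) : OnePoint ℝ :=
  if b = 0 then ∞ else (((a : ℝ) / (b : ℝ)) : OnePoint ℝ)

/-- Adjacency in the Farey graph: `x = a/b`, `y = c/d` with `ad - bc = ±1`. -/
def FareyAdj (x y : OnePoint ℝ) : Prop :=
  ∃ a b c d : ℤ, x = intPt a b ∧ y = intPt c d ∧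
    (a * d - b * c = 1 ∨ a * d - b * c = -1)

/-- `x` is an extended rational, i.e. a member of `ℚ∞ = ℚ ∪ {∞} ⊆ ℝ∞`. -/
def IsExtRat (x : OnePoint ℝ) : Prop :=
  x = ∞ ∨ ∃ q : ℚ, x = ((q : ℝ) : OnePoint ℝ)

-- One step of the index-tracking sequence, for the current coefficient sequence `c`.
open Classical in
noncomputable def eStep (c : ℕ → ℤ) (e : ℕ) : Option ℕ :=
  if h : ∃ m, badIdx c m then
    let m := Nat.find h
    if c m = 0 then
      if e + 2 ≤ m then Option.some e
      else if e = m - 1 ∨ e = m then (none : Option ℕ)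
      else Option.some (e - 2)
    else
      if e + 2 ≤ m then Option.some e
      else if e = m - 1 then (none : Option ℕ)
      else Option.some (e - 1)
  else Option.some e

/-- The index-tracking sequence `e⁽⁰⁾(k), e⁽¹⁾(k), …` (`none` once it has terminated). -/
noncomputable def eSeq (b : ℕ → ℤ) (k : ℕ) : ℕ → Option ℕ
  | 0 => Option.some k
  | n + 1 => (eSeq b k n).bind (eStep (Phi^[n] b))


/-!
Represent `S_{k-1}` by a matrix `g = !![p, q; r, s] ∈ SL(2, ℝ)` acting on `ℝ∞`. Then
`v_{k-1} = g • ∞ = p / r` and `v_n = g • t` with `t = [b_k, …, b_n]`, and `det g = 1` gives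
`v_n - v_{k-1} = -1 / (r (r t + s))`. Since `|bᵢ| ≥ 2`, the bottom row of `g` satisfies
`|s| + 1 ≤ |r|`, and the tail is either `t = ∞` (then `v_n = v_{k-1}`) or `|t| ≥ |b_k| - 1 ≥ 1`;
together these give `|r| |r t + s| ≥ |t| ≥ |b_k| - 1`.
-/

open Matrix MatrixGroups SpecialLinearGroup

lemma mob_infty (c : ℤ) : mob c ∞ = ((c : ℝ) : OnePoint ℝ) := rfl

lemma mob_coe (c : ℤ) (x : ℝ) :
    mob c x = if x = 0 then ∞ else (((c : ℝ) - 1 / x : ℝ) : OnePoint ℝ) := rfl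

def mobSL (c : ℤ) : SL(2, ℝ) :=
  ⟨!![(c : ℝ), -1; 1, 0], by simp [det_fin_two]⟩

lemma coe_mobSL (c : ℤ) : (mobSL c : Matrix (Fin 2) (Fin 2) ℝ) = !![(c : ℝ), -1; 1, 0] := rfl

lemma mob_eq_smul (c : ℤ) (z : OnePoint ℝ) : mob c z = toGL (mobSL c) • z := by
  cases z with
  | infty => simp [mob_infty, OnePoint.smul_infty_eq_ite, coe_mobSL]
  | coe x =>
    by_cases hx : x = 0
    · simp [mob_coe, OnePoint.smul_some_eq_ite, coe_mobSL, hx]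
    · simp [mob_coe, OnePoint.smul_some_eq_ite, coe_mobSL, hx]
      field_simp
      ring

lemma cfVal_append (l m : List ℤ) : cfVal (l ++ m) = toGL (l.map mobSL).prod • cfVal m := by
  induction l with
  | nil => simp
  | cons c l ih => simp [cfVal, ih, mob_eq_smul, mul_smul]

section SmulOnePoint

variable {K : Type*} [Field K] [DecidableEq K] (g : SL(2, K))

lemma toGL_smul_infty (h10 : g 1 0 ≠ 0) : toGL g • (∞ : OnePoint K) = ↑(g 0 0 / g 1 0) := by
  simp [OnePoint.smul_infty_eq_ite, coe_GL_coe_matrix, h10]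

lemma toGL_smul_coe (x : K) (h10 : g 1 0 ≠ 0) (hx : g 1 0 * x + g 1 1 ≠ 0) :
    toGL g • (x : OnePoint K) = ↑(g 0 0 / g 1 0 - 1 / (g 1 0 * (g 1 0 * x + g 1 1))) := by
  have hdet : g 0 0 * g 1 1 - g 0 1 * g 1 0 = 1 := by rw [← det_fin_two]; exact g.det_coe
  rw [OnePoint.smul_some_eq_ite, coe_GL_coe_matrix, if_neg hx]
  congr 1
  rw [div_eq_iff hx, sub_mul, div_mul_eq_mul_div, one_div_mul_eq_div, div_mul_cancel_right₀ hx]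
  field_simp
  linear_combination -hdet

end SmulOnePoint

lemma abs_le_abs_mul_abs_mul_add {K : Type*} [Field K] [LinearOrder K] [IsStrictOrderedRing K]
    {r s t : K} (hrs : |s| + 1 ≤ |r|) (ht : 1 ≤ |t|) : |t| ≤ |r| * |r * t + s| := by
  have hlow : |r| * (|t| - 1) + 1 ≤ |r * t + s| := by
    have := abs_sub_abs_le_abs_sub (r * t) (-s)
    rw [abs_mul, abs_neg, sub_neg_eq_add] at this
    nlinarith
  have hr : 1 ≤ |r| := by linarith [abs_nonneg s]
  calc |t| ≤ |r| * (|r| * (|t| - 1) + 1) := by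
        nlinarith [mul_nonneg (mul_nonneg (sub_nonneg.2 hr) (abs_nonneg r)) (sub_nonneg.2 ht)]
    _ ≤ |r| * |r * t + s| := by gcongr

/-- `convMat b k` is the matrix of `S_{k-1}`, so that `cfConv b (k - 1) = toGL (convMat b k) • ∞`. -/
def convMat (b : ℕ → ℤ) (k : ℕ) : SL(2, ℝ) :=
  (((List.range k).map b).map mobSL).prod

lemma convMat_succ (b : ℕ → ℤ) (k : ℕ) : convMat b (k + 1) = convMat b k * mobSL (b k) := by
  simp [convMat, List.range_succ]

lemma abs_convMat_one_one_add_one_le (b : ℕ → ℤ) {k : ℕ} (hk : 1 ≤ k)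
    (hb : ∀ i, 1 ≤ i → i < k → 2 ≤ |b i|) : |convMat b k 1 1| + 1 ≤ |convMat b k 1 0| := by
  induction k, hk using Nat.le_induction with
  | base => simp [convMat, coe_mobSL]
  | succ k hk ih =>
    have hbk : (2 : ℝ) ≤ |(b k : ℝ)| := by exact_mod_cast hb k hk (by omega)
    have ih := ih fun i hi hik => hb i hi (by omega)
    set r := convMat b k 1 0
    set s := convMat b k 1 1
    have h10 : convMat b (k + 1) 1 0 = r * b k + s := by
      simp [convMat_succ, coe_mobSL, Matrix.mul_apply, Fin.sum_univ_two, r, s]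
    have h11 : convMat b (k + 1) 1 1 = -r := by
      simp [convMat_succ, coe_mobSL, Matrix.mul_apply, Fin.sum_univ_two, r]
    rw [h10, h11, abs_neg]
    have := abs_sub_abs_le_abs_sub (r * b k) (-s)
    rw [abs_mul, abs_neg, sub_neg_eq_add] at this
    nlinarith [abs_nonneg r]

lemma exists_mob_eq_coe_of_two_le_abs {c : ℤ} (hc : 2 ≤ |c|) {z : OnePoint ℝ}
    (hz : z = ∞ ∨ ∃ t : ℝ, z = t ∧ 1 ≤ |t|) : ∃ u : ℝ, mob c z = u ∧ |(c : ℝ)| - 1 ≤ |u| := by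
  have hc' : (2 : ℝ) ≤ |(c : ℝ)| := by exact_mod_cast hc
  rcases hz with rfl | ⟨t, rfl, ht⟩
  · exact ⟨c, mob_infty c, by linarith⟩
  · have ht0 : t ≠ 0 := by rintro rfl; norm_num at ht
    refine ⟨c - 1 / t, by rw [mob_coe, if_neg ht0], ?_⟩
    have hinv : |1 / t| ≤ 1 := by rw [abs_div, abs_one]; exact div_le_one_of_le₀ ht (abs_nonneg t)
    have := abs_sub_abs_le_abs_sub (c : ℝ) (1 / t)
    linarith

lemma cfVal_range'_eq_infty_or (b : ℕ → ℤ) (k m : ℕ) (hb : ∀ i, k ≤ i → i ≤ k + m → 2 ≤ |b i|)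
    (hzero : b (k + m + 1) = 0) :
    cfVal ((List.range' k (m + 2)).map b) = ∞ ∨
      ∃ t : ℝ, cfVal ((List.range' k (m + 2)).map b) = t ∧ (|b k| : ℝ) - 1 ≤ |t| := by
  induction m generalizing k with
  | zero => simp [List.range'_succ, cfVal, hzero, mob_infty, mob_coe]
  | succ m ih =>
    right
    rw [List.range'_succ, List.map_cons, cfVal]
    apply exists_mob_eq_coe_of_two_le_abs (hb k le_rfl (by omega))
    have hbk : (2 : ℝ) ≤ |(b (k + 1) : ℝ)| := by exact_mod_cast hb (k + 1) (by omega) (by omega)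
    rcases ih (k + 1) (fun i hi him => hb i (by omega) (by omega))
        (by convert hzero using 2; omega) with h | ⟨t, ht, hbt⟩
    · exact Or.inl h
    · exact Or.inr ⟨t, ht, by linarith⟩

/-- **Lemma 8, second part.** If `|bᵢ| ≥ 2` for `i = 1, …, n-1`, `b_n = 0` and
`1 ≤ k < n`, then the convergents `v_n` and `v_{k-1}` are real and
`|v_n - v_{k-1}| ≤ 1/(|b_k| - 1)`. -/
theorem stmt17 (b : ℕ → ℤ) (n k : ℕ) (hb : ∀ i : ℕ, 1 ≤ i → i < n → 2 ≤ |b i|)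
    (hbn : b n = 0) (hk : 1 ≤ k) (hkn : k < n) :
    ∃ x y : ℝ, cfConv b n = ((x : OnePoint ℝ)) ∧ cfConv b (k - 1) = ((y : OnePoint ℝ)) ∧
      |x - y| ≤ 1 / ((|b k| : ℝ) - 1) := by
  obtain ⟨m, rfl⟩ : ∃ m, n = k + m + 1 := ⟨n - k - 1, by omega⟩
  set g := convMat b k
  have hsplit : (List.range (k + m + 1 + 1)).map b
      = (List.range k).map b ++ (List.range' k (m + 2)).map b := by
    rw [show k + m + 1 + 1 = k + (m + 2) by omega, List.range_add, List.range'_eq_map_range,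
      List.map_append]
  have hx : cfConv b (k + m + 1) = toGL g • cfVal ((List.range' k (m + 2)).map b) := by
    rw [cfConv, hsplit, cfVal_append]; rfl
  have hy : cfConv b (k - 1) = toGL g • ∞ := by
    rw [cfConv, Nat.sub_add_cancel hk, ← List.append_nil ((List.range k).map b), cfVal_append]; rfl
  have hrs := abs_convMat_one_one_add_one_le b hk fun i hi hik => hb i hi (by omega)
  have hr : g 1 0 ≠ 0 := abs_pos.mp (by linarith [abs_nonneg (g 1 1)])
  have hbk : (2 : ℝ) ≤ |(b k : ℝ)| := by exact_mod_cast hb k hk (by omega)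
  rw [hy, toGL_smul_infty g hr]
  rcases cfVal_range'_eq_infty_or b k m (fun i hi him => hb i (by omega) (by omega)) hbn with
    htail | ⟨t, htail, hbt⟩
  · exact ⟨_, _, by rw [hx, htail, toGL_smul_infty g hr], rfl, by simp; linarith⟩
  · have hgt := abs_le_abs_mul_abs_mul_add hrs (by linarith : 1 ≤ |t|)
    have hden : g 1 0 * t + g 1 1 ≠ 0 := by
      intro h; rw [h, abs_zero, mul_zero] at hgt; linarith
    refine ⟨_, _, by rw [hx, htail, toGL_smul_coe g t hr hden], rfl, ?_⟩
    rw [sub_sub_cancel_left, abs_neg, abs_div, abs_one, abs_mul]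
    exact one_div_le_one_div_of_le (by linarith) (by linarith)
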